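/- arXiv:2102.01561 — 7 statements merged into one kernel-verified Lean document; each statement's English description precedes it below -/
import Mathlib

section
/- The square root of 2 is positively irrational: for all natural numbers m and n with n > 0, |√2 − m/n| > 1/(4·n²). -/
/-!
If `x` is irrational and `x ^ 2 = d` is an integer, then for a fraction `r = m / n` the number
`d - r ^ 2 = (d * n ^ 2 - m ^ 2) / n ^ 2` is nonzero with integer numerator, so
`|x - r| * |x + r| = |x ^ 2 - r ^ 2| ≥ 1 / n ^ 2`. When `r` is close to `x`, the factor `|x + r|` is
below `2 * |x| + 1`, which for `x = √2` is less than `4`.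
-/

lemma one_div_sq_le_abs_intCast_sub_div_sq (d m n : ℤ) (h : ((m : ℝ) / n) ^ 2 ≠ d) :
    1 / (n : ℝ) ^ 2 ≤ |d - ((m : ℝ) / n) ^ 2| := by
  rcases eq_or_ne n 0 with rfl | hn
  · simp
  have hn2 : (0 : ℝ) < (n : ℝ) ^ 2 := by positivity
  have hnum : d * n ^ 2 - m ^ 2 ≠ 0 := by
    contrapose! h
    have h' : (m : ℝ) ^ 2 = d * (n : ℝ) ^ 2 := by exact_mod_cast (sub_eq_zero.1 h).symm
    rw [div_pow, h', mul_div_cancel_right₀ _ hn2.ne']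
  have hsplit : (d : ℝ) - ((m : ℝ) / n) ^ 2 = ((d * n ^ 2 - m ^ 2 : ℤ) : ℝ) / (n : ℝ) ^ 2 := by
    push_cast
    field_simp
  rw [hsplit, abs_div, abs_of_pos hn2, ← Int.cast_abs]
  gcongr
  exact_mod_cast Int.one_le_abs hnum

lemma Irrational.ratCast_sq_ne_sq {x : ℝ} (hx : Irrational x) (q : ℚ) : (q : ℝ) ^ 2 ≠ x ^ 2 := by
  intro h
  rcases sq_eq_sq_iff_eq_or_eq_neg.1 h with h | h
  · exact hx.ne_rat q h.symm
  · exact hx.ne_rat (-q) (by push_cast; linarith)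

lemma Irrational.one_div_sq_le_abs_sub_mul_abs_add {x : ℝ} (hx : Irrational x) {d : ℤ}
    (hd : x ^ 2 = d) (m n : ℤ) :
    1 / (n : ℝ) ^ 2 ≤ |x - m / n| * |x + m / n| := by
  have hne : ((m : ℝ) / n) ^ 2 ≠ d := by
    rw [← hd]
    exact_mod_cast hx.ratCast_sq_ne_sq ((m : ℚ) / n)
  calc 1 / (n : ℝ) ^ 2 ≤ |d - ((m : ℝ) / n) ^ 2| := one_div_sq_le_abs_intCast_sub_div_sq d m n hne
    _ = |x - m / n| * |x + m / n| := by rw [← abs_mul, ← hd]; ring_nf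

theorem Irrational.one_div_mul_sq_lt_abs_sub_div {x : ℝ} (hx : Irrational x) {d : ℤ}
    (hd : x ^ 2 = d) {c : ℝ} (hc : 2 * |x| + 1 ≤ c) (m n : ℤ) :
    1 / (c * (n : ℝ) ^ 2) < |x - m / n| := by
  rcases eq_or_ne n 0 with rfl | hn
  · simpa using hx.ne_zero
  have hn2 : (1 : ℝ) ≤ (n : ℝ) ^ 2 :=
    (one_le_sq_iff_one_le_abs _).2 (by exact_mod_cast Int.one_le_abs hn)
  have hc1 : 1 < c := by linarith [abs_pos.2 hx.ne_zero]
  set r : ℝ := m / n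
  have hprod := hx.one_div_sq_le_abs_sub_mul_abs_add hd m n
  rcases lt_or_ge |x - r| 1 with hclose | hfar
  · have hsum : |x + r| < c := by
      calc |x + r| = |2 * x - (x - r)| := by ring_nf
        _ ≤ 2 * |x| + |x - r| := by
          simpa [abs_mul] using abs_sub (2 * x) (x - r)
        _ < c := by linarith
    have hsum_pos : 0 < |x + r| := by
      refine abs_pos.2 fun h ↦ ?_
      rw [h, abs_zero, mul_zero] at hprod
      linarith [one_div_pos.2 (zero_lt_one.trans_le hn2)]
    calc 1 / (c * (n : ℝ) ^ 2) < 1 / (|x + r| * (n : ℝ) ^ 2) := by gcongr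
      _ ≤ |x - r| := by
        rw [div_le_iff₀ (by positivity)]
        rw [div_le_iff₀ (by positivity)] at hprod
        linarith
  · calc 1 / (c * (n : ℝ) ^ 2) < 1 := by
          rw [div_lt_one (by positivity)]
          nlinarith
      _ ≤ |x - r| := hfar

theorem sqrt_two_positively_irrational_general (m n : ℕ) :
    |Real.sqrt 2 - (m : ℝ) / (n : ℝ)| > 1 / (4 * (n : ℝ) ^ 2) := by
  have hsqrt : 2 * |Real.sqrt 2| + 1 ≤ 4 := by
    rw [abs_of_nonneg (Real.sqrt_nonneg 2)]
    nlinarith [Real.sq_sqrt (zero_le_two : (0 : ℝ) ≤ 2), Real.sqrt_nonneg 2]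
  have h := irrational_sqrt_two.one_div_mul_sq_lt_abs_sub_div (d := 2) (by simp) hsqrt m n
  push_cast at h
  exact h

theorem sqrt_two_positively_irrational (m n : ℕ) (hn : 0 < n) :
    |Real.sqrt 2 - (m : ℝ) / (n : ℝ)| > 1 / (4 * (n : ℝ) ^ 2) :=
  sqrt_two_positively_irrational_general m n
end

section
/- Monotone Bar Induction for Baire space (classical form): let B and C be sets of finite sequences of natural numbers such that (1) every α : ℕ → ℕ has some initial segment in B, (2) B ⊆ C, and (3) for every finite sequence s, s ∈ C if and only if s⟨n⟩ ∈ C for all n (where s⟨n⟩ is s extended by n). Then the empty sequence is in C. -/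
/-! If `[]` were not in `C`, the inductivity of `C` would let us extend any sequence outside `C`
by one more entry while staying outside `C`. Dependent choice then yields a branch `α` all of whose
initial segments lie outside `C`, hence outside `B ⊆ C`, contradicting the bar condition on `B`. -/

theorem List.exists_forall_ofFn_of_forall_exists_append {α : Type*} {P : List α → Prop}
    (h_nil : P []) (h_ext : ∀ s, P s → ∃ a, P (s ++ [a])) :
    ∃ f : ℕ → α, ∀ n, P (List.ofFn fun i : Fin n => f i) := by
  choose next h_next using h_ext
  let node : ℕ → {s // P s} :=
    Nat.rec ⟨[], h_nil⟩ fun _ t => ⟨t.1 ++ [next t.1 t.2], h_next t.1 t.2⟩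
  let f : ℕ → α := fun n => next (node n).1 (node n).2
  have node_eq : ∀ n, (node n).1 = List.ofFn fun i : Fin n => f i := by
    intro n
    induction n with
    | zero => rfl
    | succ n ih =>
      change (node n).1 ++ [f n] = _
      rw [ih, List.ofFn_succ', List.concat_eq_append]
      rfl
  exact ⟨f, fun n => node_eq n ▸ (node n).2⟩

theorem monotone_bar_induction (B C : Set (List ℕ))
    (hbar : ∀ α : ℕ → ℕ, ∃ n : ℕ, (List.ofFn fun i : Fin n => α i) ∈ B)
    (hBC : B ⊆ C)
    (hind : ∀ s : List ℕ, s ∈ C ↔ ∀ n : ℕ, s ++ [n] ∈ C) :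
    ([] : List ℕ) ∈ C := by
  by_contra h_nil
  have h_ext : ∀ s, s ∉ C → ∃ n, s ++ [n] ∉ C := fun s hs => not_forall.mp (mt (hind s).2 hs)
  obtain ⟨α, hα⟩ := List.exists_forall_ofFn_of_forall_exists_append h_nil h_ext
  obtain ⟨n, hn⟩ := hbar α
  exact hα n (hBC hn)
end

section
/- Principle of Open Induction on [0,1]: if G is an open subset of ℝ that is progressive in [0,1], meaning that for every x ∈ [0,1], the inclusion [0,x) ⊆ G implies x ∈ G, then [0,1] ⊆ G. -/
/-!
If `[a, b] ⊄ G`, the set `[a, b] \ G` is closed (as `G` is open), nonempty and bounded below, so it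
has a least element `c`. Minimality gives `[a, c) ⊆ G`, and progressiveness then puts `c` in `G`,
a contradiction.
-/

open Set

theorem IsOpen.Icc_subset_of_forall_Ico_subset_imp_mem {α : Type*}
    [ConditionallyCompleteLinearOrder α] [TopologicalSpace α] [OrderTopology α]
    {a b : α} {G : Set α} (hG : IsOpen G) (hprog : ∀ x ∈ Icc a b, Ico a x ⊆ G → x ∈ G) :
    Icc a b ⊆ G := by
  by_contra hsub
  obtain ⟨x, hx, hxG⟩ := not_subset.mp hsub
  have hleast : IsLeast (Icc a b \ G) (sInf (Icc a b \ G)) :=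
    (isClosed_Icc.sdiff hG).isLeast_csInf ⟨x, hx, hxG⟩ ⟨a, fun y hy => hy.1.1⟩
  obtain ⟨⟨hcIcc, hcG⟩, hc_le⟩ := hleast
  refine hcG (hprog _ hcIcc fun y hy => ?_)
  by_contra hyG
  exact hy.2.not_ge (hc_le ⟨⟨hy.1, hy.2.le.trans hcIcc.2⟩, hyG⟩)

theorem open_induction_unit_interval (G : Set ℝ) (hG : IsOpen G)
    (hprog : ∀ x ∈ Set.Icc (0 : ℝ) 1, Set.Ico (0 : ℝ) x ⊆ G → x ∈ G) :
    Set.Icc (0 : ℝ) 1 ⊆ G :=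
  hG.Icc_subset_of_forall_Ico_subset_imp_mem hprog
end

section
/- Intuitionistic Ramsey Theorem in finite dimension k (classical reading): for every k > 0 and all sets A, B of strictly increasing k-tuples of natural numbers, if A and B are both almost-full, then A ∩ B is almost-full. Here a set X of strictly increasing k-tuples is almost-full if for every strictly increasing ζ : ℕ → ℕ there exists a strictly increasing k-tuple s of natural numbers with (ζ(s(0)), ..., ζ(s(k−1))) ∈ X. -/
/-!
The infinite Ramsey theorem, by induction on `k`: refining a sequence again and again with
the `k`-dimensional case makes the colour of a `(k+1)`-tuple along the diagonal depend only
on its first entry, and a pigeonhole on that first entry finishes.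

A set `X` of `k`-tuples is a two-colouring, and almost-fullness excludes the homogeneous
colour "outside `X`". So below any `ζ` there is `η` with `ζ ∘ η` mapping every increasing
tuple into `A`; below `ζ ∘ η` there is `θ` doing the same for `B`, and any increasing tuple
then lands in `A ∩ B` under `ζ ∘ η ∘ θ`.
-/

def AlmostFull (k : ℕ) (X : Set (Fin k → ℕ)) : Prop :=
  ∀ ζ : ℕ → ℕ, StrictMono ζ →
    ∃ s : Fin k → ℕ, StrictMono s ∧ (fun i => ζ (s i)) ∈ X

section InfiniteRamsey

variable {C : Type*}

theorem exists_strictMono_forall_eq [Finite C] (f : ℕ → C) :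
    ∃ φ : ℕ → ℕ, StrictMono φ ∧ ∃ a, ∀ n, f (φ n) = a := by
  obtain ⟨a, ha⟩ := Finite.exists_infinite_fiber f
  obtain ⟨φ, hφ, hφa⟩ := Filter.extraction_of_frequently_atTop
    (Nat.frequently_atTop_iff_infinite.2 (Set.infinite_coe_iff.1 ha))
  exact ⟨φ, hφ, a, hφa⟩

section Refinement

variable {F g : ℕ → ℕ → ℕ}

theorem strictMono_of_refines (hFg : ∀ n, F (n + 1) = F n ∘ g n)
    (hg : ∀ n, StrictMono (g n)) (hF0 : StrictMono (F 0)) : ∀ n, StrictMono (F n)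
  | 0 => hF0
  | n + 1 => hFg n ▸ (strictMono_of_refines hFg hg hF0 n).comp (hg n)

theorem diag_mem_range_of_refines (hFg : ∀ n, F (n + 1) = F n ∘ g n) {n m : ℕ}
    (hnm : n ≤ m) : F m 0 ∈ Set.range (F n) :=
  have hanti : Antitone fun n => Set.range (F n) :=
    antitone_nat_of_succ_le fun n => hFg n ▸ Set.range_comp_subset_range _ _
  hanti hnm (Set.mem_range_self 0)

theorem strictMono_diag_of_refines (hFg : ∀ n, F (n + 1) = F n ∘ g n)
    (hg : ∀ n, StrictMono (g n)) (hg0 : ∀ n, 0 < g n 0) (hF0 : StrictMono (F 0)) :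
    StrictMono fun n => F n 0 :=
  strictMono_nat_of_lt_succ fun n => by
    simpa only [hFg n, Function.comp_apply] using strictMono_of_refines hFg hg hF0 n (hg0 n)

end Refinement

theorem exists_strictMono_color_eq_head {k : ℕ} (c : (Fin (k + 1) → ℕ) → C)
    (step : ∀ η : ℕ → ℕ, ∃ φ : ℕ → ℕ, StrictMono φ ∧ 0 < φ 0 ∧
      ∃ a, ∀ t : Fin k → ℕ, StrictMono t → c (Fin.cons (η 0) (η ∘ φ ∘ t)) = a) :
    ∃ x : ℕ → ℕ, StrictMono x ∧
      ∃ col : ℕ → C, ∀ s : Fin (k + 1) → ℕ, StrictMono s → c (x ∘ s) = col (s 0) := by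
  choose φ hφ hφ0 a ha using step
  set F : ℕ → ℕ → ℕ := fun n => (fun η => η ∘ φ η)^[n] id
  have hFg : ∀ n, F (n + 1) = F n ∘ φ (F n) := fun n => Function.iterate_succ_apply' _ _ _
  have hF := strictMono_of_refines hFg (fun n => hφ (F n)) strictMono_id
  have hx :=
    strictMono_diag_of_refines hFg (fun n => hφ (F n)) (fun n => hφ0 (F n)) strictMono_id
  refine ⟨fun n => F n 0, hx, fun n => a (F n), fun s hs => ?_⟩
  choose t ht using fun i : Fin k =>
    diag_mem_range_of_refines hFg (n := s 0 + 1) (hs (Fin.succ_pos i))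
  have ht_mono : StrictMono t := fun i j hij =>
    (hF (s 0 + 1)).lt_iff_lt.1 (by simpa only [ht] using hx (hs (Fin.succ_lt_succ_iff.2 hij)))
  refine (congrArg c ?_).trans (ha (F (s 0)) t ht_mono)
  funext i
  refine Fin.cases rfl (fun i => ?_) i
  simp only [Function.comp_apply, Fin.cons_succ, ← ht, hFg]

theorem exists_strictMono_forall_color_eq [Finite C] {k : ℕ} (c : (Fin k → ℕ) → C) :
    ∃ ζ : ℕ → ℕ, StrictMono ζ ∧ ∃ a, ∀ s : Fin k → ℕ, StrictMono s → c (ζ ∘ s) = a := by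
  induction k with
  | zero => exact ⟨id, strictMono_id, c Fin.elim0, fun s _ => congrArg c (Subsingleton.elim _ _)⟩
  | succ k ih =>
    obtain ⟨x, hx, col, hcol⟩ := exists_strictMono_color_eq_head c fun η => by
      obtain ⟨θ, hθ, a, ha⟩ := ih fun t => c (Fin.cons (η 0) (η ∘ (· + 1) ∘ t))
      exact ⟨(· + 1) ∘ θ, (strictMono_id.add_const 1).comp hθ, Nat.succ_pos _, a, ha⟩
    obtain ⟨e, he, a, hea⟩ := exists_strictMono_forall_eq col
    exact ⟨x ∘ e, hx.comp he, a, fun s hs => (hcol _ (he.comp hs)).trans (hea _)⟩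

end InfiniteRamsey

theorem AlmostFull.exists_forall_mem {k : ℕ} {X : Set (Fin k → ℕ)} (hX : AlmostFull k X)
    {ζ : ℕ → ℕ} (hζ : StrictMono ζ) :
    ∃ η : ℕ → ℕ, StrictMono η ∧ ∀ s : Fin k → ℕ, StrictMono s → ζ ∘ η ∘ s ∈ X := by
  obtain ⟨η, hη, p, hp⟩ := exists_strictMono_forall_color_eq fun s => ζ ∘ s ∈ X
  obtain ⟨s, hs, hsX⟩ := hX (ζ ∘ η) (hζ.comp hη)
  have hpX : p := (hp s hs).mp hsX
  exact ⟨η, hη, fun s hs => (hp s hs).mpr hpX⟩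

theorem intuitionistic_ramsey_general (k : ℕ) (A B : Set (Fin k → ℕ))
    (hA : AlmostFull k A) (hB : AlmostFull k B) :
    AlmostFull k (A ∩ B) := by
  intro ζ hζ
  obtain ⟨η, hη, hηA⟩ := hA.exists_forall_mem hζ
  obtain ⟨θ, hθ, hθB⟩ := hB.exists_forall_mem (hζ.comp hη)
  have hval : StrictMono (Fin.val : Fin k → ℕ) := Fin.val_strictMono
  exact ⟨η ∘ θ ∘ Fin.val, hη.comp (hθ.comp hval), hηA _ (hθ.comp hval), hθB _ hval⟩

theorem intuitionistic_ramsey (k : ℕ) (hk : 0 < k) (A B : Set (Fin k → ℕ))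
    (hA : AlmostFull k A) (hB : AlmostFull k B) :
    AlmostFull k (A ∩ B) :=
  intuitionistic_ramsey_general k A B hA hB
end

section
/- Extended Finite Ramsey Theorem (Paris–Harrington): for all positive integers k, r, n there exists M such that for every coloring c of the strictly increasing k-tuples from {0,...,M−1} with r colors, there exist p ≥ n and a strictly increasing p-tuple t of numbers below M with t(0) = p such that all strictly increasing k-tuples drawn from the range of t receive the same color under c. -/
/-!
Suppose no `M` works and fix, for every `M`, a bad colouring `c M`. Along a nonprincipal
ultrafilter `U` on `ℕ` these colourings converge to a colouring `C` of all strictly increasing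
`k`-tuples of naturals. By the infinite Ramsey theorem `C` is constant on the `k`-tuples of
some increasing sequence `f`, and then so is `c M` for `U`-many, hence for some large,
`M`, on the `k`-tuples of the finite segment `f n < f (n + 1) < ⋯ < f (n + f n - 1)`. This
segment has minimum equal to its length `f n ≥ n`, contradicting the badness of `c M`.
-/

open Set Filter

section InfiniteRamsey

variable {α : Type*} {k : ℕ}

def IsMonochromatic (C : (Fin k → ℕ) → α) (H : Set ℕ) (j : α) : Prop :=
  ∀ s : Fin k → ℕ, StrictMono s → (∀ i, s i ∈ H) → C s = j

lemma exists_infinite_monochromatic_cons_sInf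
    (ih : ∀ (C : (Fin k → ℕ) → α) {S : Set ℕ}, S.Infinite →
      ∃ H ⊆ S, H.Infinite ∧ ∃ j, IsMonochromatic C H j)
    (C : (Fin (k + 1) → ℕ) → α) {T : Set ℕ} (hT : T.Infinite) :
    ∃ H ⊆ T, H.Infinite ∧ (∀ x ∈ H, sInf T < x) ∧
      ∃ j, IsMonochromatic (fun s => C (Fin.cons (sInf T) s)) H j := by
  obtain ⟨H, hHT, hH, j, hj⟩ :=
    ih (fun s => C (Fin.cons (sInf T) s)) (hT.sdiff (finite_Iic (sInf T)))
  exact ⟨H, fun x hx => (hHT hx).1, hH, fun x hx => not_le.1 (hHT hx).2, j, hj⟩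

/-- The diagonal step: pick `a i := sInf (T i)` along a decreasing chain of infinite sets
`T (i + 1) ⊆ T i`, each monochromatic for the `k`-tuples extending `a i`; the colour then
depends only on the first entry, and pigeonhole on these colours finishes. -/
lemma exists_infinite_monochromatic_succ [Finite α]
    (ih : ∀ (C : (Fin k → ℕ) → α) {S : Set ℕ}, S.Infinite →
      ∃ H ⊆ S, H.Infinite ∧ ∃ j, IsMonochromatic C H j)
    (C : (Fin (k + 1) → ℕ) → α) {S : Set ℕ} (hS : S.Infinite) :
    ∃ H ⊆ S, H.Infinite ∧ ∃ j, IsMonochromatic C H j := by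
  choose next hnext_sub hnext_inf hnext_gt col hcol using
    fun T : {T : Set ℕ // T.Infinite} => exists_infinite_monochromatic_cons_sInf ih C T.2
  let T : ℕ → {T : Set ℕ // T.Infinite} := fun i => (fun T => ⟨next T, hnext_inf T⟩)^[i] ⟨S, hS⟩
  have hT_succ : ∀ i, (T (i + 1)).1 = next (T i) := fun i =>
    congrArg Subtype.val (Function.iterate_succ_apply' _ i _)
  have hT_anti : Antitone fun i => (T i).1 :=
    antitone_nat_of_succ_le fun i => (hT_succ i).trans_subset (hnext_sub _)
  let a : ℕ → ℕ := fun i => sInf (T i).1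
  have ha_mem : ∀ i, a i ∈ (T i).1 := fun i => Nat.sInf_mem (T i).2.nonempty
  have ha : StrictMono a := strictMono_nat_of_lt_succ fun i =>
    hnext_gt (T i) _ (hT_succ i ▸ ha_mem (i + 1))
  obtain ⟨j, hj⟩ := Finite.exists_infinite_fiber fun i => col (T i)
  refine ⟨a '' _, ?_, (infinite_coe_iff.1 hj).image ha.injective.injOn, j, ?_⟩
  · rintro _ ⟨i, -, rfl⟩
    exact hT_anti (Nat.zero_le i) (ha_mem i)
  · intro s hs hsH
    obtain ⟨i, hi, hai⟩ := hsH 0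
    have htail : ∀ m : Fin k, Fin.tail s m ∈ next (T i) := by
      intro m
      obtain ⟨i', -, hai'⟩ := hsH m.succ
      have hii' : i < i' := ha.lt_iff_lt.1 (by rw [hai, hai']; exact hs (Fin.succ_pos m))
      show s m.succ ∈ _
      rw [← hai', ← hT_succ]
      exact hT_anti (Nat.succ_le_of_lt hii') (ha_mem i')
    calc C s = C (Fin.cons (a i) (Fin.tail s)) := by rw [hai, Fin.cons_self_tail]
      _ = col (T i) := hcol (T i) _ (fun _ _ h => hs (Fin.succ_lt_succ_iff.2 h)) htail
      _ = j := hi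

theorem exists_infinite_monochromatic [Finite α] (C : (Fin k → ℕ) → α) {S : Set ℕ}
    (hS : S.Infinite) : ∃ H ⊆ S, H.Infinite ∧ ∃ j, IsMonochromatic C H j := by
  induction k generalizing S with
  | zero => exact ⟨S, subset_rfl, hS, C Fin.elim0, fun s _ _ => congrArg C (Subsingleton.elim _ _)⟩
  | succ k ih => exact exists_infinite_monochromatic_succ (fun C _ hS => ih C hS) C hS

theorem exists_strictMono_monochromatic [Finite α] (C : (Fin k → ℕ) → α) :
    ∃ f : ℕ → ℕ, StrictMono f ∧ ∃ j, ∀ u : Fin k → ℕ, StrictMono u → C (f ∘ u) = j := by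
  obtain ⟨H, -, hH, j, hj⟩ := exists_infinite_monochromatic C infinite_univ
  exact ⟨Nat.nth (· ∈ H), Nat.nth_strictMono hH, j, fun u hu =>
    hj _ ((Nat.nth_strictMono hH).comp hu) fun i => Nat.nth_mem_of_infinite hH _⟩

end InfiniteRamsey

lemma Ultrafilter.exists_eventually_eq {β γ : Type*} [Finite γ] (U : Ultrafilter β)
    (g : β → γ) : ∃ j, ∀ᶠ x in U, g x = j := by
  obtain ⟨j, hj⟩ := (U.map g).eq_pure_of_finite
  have hj' : {j} ∈ U.map g := by
    rw [hj]
    exact Ultrafilter.mem_pure.2 rfl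
  exact ⟨j, Ultrafilter.mem_map.1 hj'⟩

theorem paris_harrington_general (k r n : ℕ) (hn : 0 < n) :
    ∃ M : ℕ, ∀ c : (Fin k → Fin M) → Fin r,
      ∃ p : ℕ, ∃ hnp : n ≤ p, ∃ t : Fin p → Fin M, StrictMono t ∧
        ((t ⟨0, lt_of_lt_of_le hn hnp⟩ : Fin M) : ℕ) = p ∧
        ∃ j : Fin r, ∀ u : Fin k → Fin p, StrictMono u →
          c (fun i => t (u i)) = j := by
  by_contra! h
  choose c hc using h
  -- reading tuples of naturals modulo `M + 1` makes `c (M + 1)` total; only tuples below `M` matter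
  choose C hC using fun s : Fin k → ℕ =>
    (hyperfilter ℕ).exists_eventually_eq fun M => c (M + 1) fun i => Fin.ofNat (M + 1) (s i)
  obtain ⟨f, hf, j, hj⟩ := exists_strictMono_monochromatic C
  let p := f n
  have hlarge : ∀ᶠ M in hyperfilter ℕ, f (n + p) < M :=
    hyperfilter_le_cofinite (Nat.cofinite_eq_atTop ▸ eventually_gt_atTop _)
  have hmono : ∀ᶠ M in hyperfilter ℕ, ∀ u : Fin k → Fin p, StrictMono u →
      c (M + 1) (fun i => Fin.ofNat (M + 1) (f (n + u i))) = j :=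
    eventually_all.2 fun u => eventually_imp_distrib_left.2 fun hu =>
      (hC _).mono fun _ hM => hM.trans (hj (fun i => n + u i) fun _ _ h => by simpa using hu h)
  obtain ⟨M, hM, hcM⟩ := (hlarge.and hmono).exists
  have hval : ∀ i < p, (Fin.ofNat (M + 1) (f (n + i)) : ℕ) = f (n + i) := fun i hi =>
    (Fin.val_ofNat _ _).trans (Nat.mod_eq_of_lt (by linarith [hf (Nat.add_lt_add_left hi n)]))
  obtain ⟨u, hu, hne⟩ := hc (M + 1) p (hf.id_le n) (fun i => Fin.ofNat (M + 1) (f (n + i)))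
    (fun a b h => Fin.lt_def.2 (by rw [hval a a.2, hval b b.2]; exact hf (by simpa using h)))
    (hval 0 (hf.id_le n |>.trans_lt' hn)) j
  exact hne (hcM u hu)

theorem paris_harrington (k r n : ℕ) (hk : 0 < k) (hr : 0 < r) (hn : 0 < n) :
    ∃ M : ℕ, ∀ c : (Fin k → Fin M) → Fin r,
      ∃ p : ℕ, ∃ hnp : n ≤ p, ∃ t : Fin p → Fin M, StrictMono t ∧
        ((t ⟨0, lt_of_lt_of_le hn hnp⟩ : Fin M) : ℕ) = p ∧
        ∃ j : Fin r, ∀ u : Fin k → Fin p, StrictMono u →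
          c (fun i => t (u i)) = j :=
  paris_harrington_general k r n hn
end

section
/- Diagonal fixed-point for continuous self-maps of Baire space: for every continuous φ : (ℕ → ℕ) → (ℕ → ℕ) there exists α : ℕ → ℕ such that for every m, the m-th subsequence of α has a nonzero value if and only if the m-th subsequence of φ(α) has a nonzero value; consequently (∀m ∃n, α^m(n) ≠ 0) ↔ (∀m ∃n, (φ α)^m(n) ≠ 0). -/
/-!
Build `α` as the limit of approximations `f s` with restraints `r s`, where `f (s + 1)` agrees with
`f s` below `r s`. Stage `s` serves the column `m = (unpair s).1`: if `φ (f s)` is nonzero at some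
`k` in column `m`, put a `1` into column `m` beyond both `r s` and a modulus of continuity of
`φ · k` at `f s`, and raise the restraint past it. From then on both `α` and `φ α` are nonzero in
column `m`. Conversely, `α` only becomes nonzero through such an action, and if `φ α` is nonzero at
`k` in column `m`, every late stage serving `m` sees an approximation agreeing with `α` up to the
modulus at `k`, so it acts.
-/

open Function PiNat

namespace DiagonalFixedPoint

theorem exists_cylinder_subset_fiber {E : ℕ → Type*} [∀ n, TopologicalSpace (E n)]
    [∀ n, DiscreteTopology (E n)] {β : Type*} [TopologicalSpace β] [DiscreteTopology β]
    {g : (∀ n, E n) → β} (hg : Continuous g) (x : ∀ n, E n) :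
    ∃ N, cylinder x N ⊆ g ⁻¹' {g x} := by
  obtain ⟨_, ⟨z, N, rfl⟩, hx, hsub⟩ := (isTopologicalBasis_cylinders E).mem_nhds_iff.1
    (hg.continuousAt.preimage_mem_nhds ((isOpen_discrete {g x}).mem_nhds rfl))
  rw [← mem_cylinder_iff_eq.1 hx] at hsub
  exact ⟨N, hsub⟩

section StableLimit

variable {β : Type*} (f : ℕ → ℕ → β) (r : ℕ → ℕ)

def stableLimit : ℕ → β := fun i => f (i + 1) i

theorem mem_cylinder_of_le (hr : Monotone r) (hf : ∀ s, f (s + 1) ∈ cylinder (f s) (r s))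
    {s t : ℕ} (hst : s ≤ t) : f t ∈ cylinder (f s) (r s) := by
  induction t, hst using Nat.le_induction with
  | base => exact self_mem_cylinder _ _
  | succ t hst ih =>
    rw [← mem_cylinder_iff_eq.1 ih]
    exact cylinder_anti _ (hr hst) (hf t)

theorem stableLimit_mem_cylinder (hr : StrictMono r) (hf : ∀ s, f (s + 1) ∈ cylinder (f s) (r s))
    (s : ℕ) : stableLimit f ∈ cylinder (f s) (r s) := by
  intro i hi
  rcases le_total s (i + 1) with hs | hs
  · exact mem_cylinder_of_le f r hr.monotone hf hs i hi
  · exact (mem_cylinder_of_le f r hr.monotone hf hs i (hr.id_le (i + 1))).symm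

end StableLimit

def slot (m n : ℕ) : ℕ := 2 ^ n * (2 * m + 1) - 1

theorem le_slot (m n : ℕ) : n ≤ slot m n := by
  have : n < 2 ^ n := Nat.lt_two_pow_self
  have : 2 ^ n ≤ 2 ^ n * (2 * m + 1) := Nat.le_mul_of_pos_right _ (by omega)
  unfold slot
  omega

theorem eq_of_slot_eq {m m' n n' : ℕ} (h : slot m n = slot m' n') : m = m' := by
  have : 0 < 2 ^ n * (2 * m + 1) := by positivity
  have : 0 < 2 ^ n' * (2 * m' + 1) := by positivity
  have h' : 2 ^ n * (2 * m + 1) = 2 ^ n' * (2 * m' + 1) := by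
    unfold slot at h
    omega
  have := congrArg (ordCompl[2] ·) h'
  simp only [Nat.ordCompl_pow_mul_of_not_dvd _ Nat.prime_two (by omega : ¬2 ∣ 2 * m + 1),
    Nat.ordCompl_pow_mul_of_not_dvd _ Nat.prime_two (by omega : ¬2 ∣ 2 * m' + 1)] at this
  omega

section Construction

variable {φ : (ℕ → ℕ) → ℕ → ℕ} (hφ : Continuous φ)

noncomputable def modulus (f : ℕ → ℕ) (k : ℕ) : ℕ :=
  (exists_cylinder_subset_fiber ((continuous_apply k).comp hφ) f).choose

theorem apply_eq_of_mem_cylinder_modulus {f g : ℕ → ℕ} {k : ℕ}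
    (hg : g ∈ cylinder f (modulus hφ f k)) : φ g k = φ f k :=
  (exists_cylinder_subset_fiber ((continuous_apply k).comp hφ) f).choose_spec hg

structure Stage where
  approx : ℕ → ℕ
  restraint : ℕ

def Stage.Requires (φ : (ℕ → ℕ) → ℕ → ℕ) (S : Stage) (m : ℕ) : Prop :=
  ∃ n, φ S.approx (slot m n) ≠ 0

noncomputable def Stage.target (S : Stage) {m : ℕ} (h : S.Requires φ m) : ℕ :=
  slot m (max (modulus hφ S.approx (slot m h.choose)) S.restraint)

open Classical in
noncomputable def Stage.next (S : Stage) (m : ℕ) : Stage :=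
  if h : S.Requires φ m then ⟨update S.approx (S.target hφ h) 1, S.target hφ h + 1⟩
  else ⟨S.approx, S.restraint + 1⟩

namespace Stage

theorem le_target {S : Stage} {m : ℕ} (h : S.Requires φ m) :
    modulus hφ S.approx (slot m h.choose) ≤ S.target hφ h ∧ S.restraint ≤ S.target hφ h :=
  max_le_iff.1 (le_slot _ _)

theorem restraint_lt_next (S : Stage) (m : ℕ) : S.restraint < (S.next hφ m).restraint := by
  unfold next
  split_ifs
  · exact Nat.lt_succ_of_le (le_target hφ _).2
  · exact Nat.lt_succ_self _

theorem next_mem_cylinder (S : Stage) (m : ℕ) : (S.next hφ m).approx ∈ cylinder S.approx S.restraint := by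
  unfold next
  split_ifs with h
  · exact fun i hi => update_of_ne (hi.trans_le (le_target hφ h).2).ne _ _
  · exact self_mem_cylinder _ _

theorem ne_zero_or_requires_of_next_ne_zero {S : Stage} {m i : ℕ} (hi : (S.next hφ m).approx i ≠ 0) :
    S.approx i ≠ 0 ∨ S.Requires φ m ∧ ∃ n, i = slot m n := by
  unfold next at hi
  split_ifs at hi with h
  · by_cases hic : i = S.target hφ h
    · exact Or.inr ⟨h, _, hic⟩
    · exact Or.inl (by rwa [← update_of_ne hic (1 : ℕ) S.approx])
  · exact Or.inl hi

theorem secures_of_requires {S : Stage} {m : ℕ} (h : S.Requires φ m) {g : ℕ → ℕ}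
    (hg : g ∈ cylinder (S.next hφ m).approx (S.next hφ m).restraint) :
    (∃ n, g (slot m n) ≠ 0) ∧ ∃ n, φ g (slot m n) ≠ 0 := by
  simp only [next, dif_pos h] at hg
  refine ⟨⟨max (modulus hφ S.approx (slot m h.choose)) S.restraint, ?_⟩, h.choose, ?_⟩
  · change g (S.target hφ h) ≠ 0
    rw [hg _ (Nat.lt_succ_self _), update_self]
    exact one_ne_zero
  · have hgN : g ∈ cylinder S.approx (modulus hφ S.approx (slot m h.choose)) := fun i hi => by
      have := (le_target hφ h).1
      rw [hg i (by omega), update_of_ne (by omega)]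
    rw [apply_eq_of_mem_cylinder_modulus hφ hgN]
    exact h.choose_spec

end Stage

noncomputable def stage : ℕ → Stage
  | 0 => ⟨0, 0⟩
  | s + 1 => (stage s).next hφ s.unpair.1

noncomputable def fixedPoint : ℕ → ℕ := stableLimit fun s => (stage hφ s).approx

theorem strictMono_restraint_stage : StrictMono fun s => (stage hφ s).restraint :=
  strictMono_nat_of_lt_succ fun s => (stage hφ s).restraint_lt_next hφ _

theorem fixedPoint_mem_cylinder (s : ℕ) :
    fixedPoint hφ ∈ cylinder (stage hφ s).approx (stage hφ s).restraint :=
  stableLimit_mem_cylinder _ _ (strictMono_restraint_stage hφ)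
    (fun s => (stage hφ s).next_mem_cylinder hφ _) s

theorem exists_requires_of_stage_ne_zero {s i : ℕ} (h : (stage hφ s).approx i ≠ 0) :
    ∃ t, (stage hφ t).Requires φ t.unpair.1 ∧ ∃ n, i = slot t.unpair.1 n := by
  induction s with
  | zero => exact absurd rfl h
  | succ s ih =>
    rcases Stage.ne_zero_or_requires_of_next_ne_zero hφ h with h | ⟨hreq, hslot⟩
    · exact ih h
    · exact ⟨s, hreq, hslot⟩

theorem fixedPoint_secures {s : ℕ} (h : (stage hφ s).Requires φ s.unpair.1) :
    (∃ n, fixedPoint hφ (slot s.unpair.1 n) ≠ 0) ∧ ∃ n, φ (fixedPoint hφ) (slot s.unpair.1 n) ≠ 0 :=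
  Stage.secures_of_requires hφ h (fixedPoint_mem_cylinder hφ (s + 1))

theorem exists_requires_of_fixedPoint_ne_zero {m n : ℕ} (h : fixedPoint hφ (slot m n) ≠ 0) :
    ∃ s, s.unpair.1 = m ∧ (stage hφ s).Requires φ s.unpair.1 := by
  obtain ⟨s, hs, n', hslot⟩ := exists_requires_of_stage_ne_zero hφ h
  exact ⟨s, (eq_of_slot_eq hslot).symm, hs⟩

theorem exists_requires_of_phi_fixedPoint_ne_zero {m n : ℕ}
    (h : φ (fixedPoint hφ) (slot m n) ≠ 0) :
    ∃ s, s.unpair.1 = m ∧ (stage hφ s).Requires φ s.unpair.1 := by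
  set N := modulus hφ (fixedPoint hφ) (slot m n)
  refine ⟨Nat.pair m N, by rw [Nat.unpair_pair], ?_⟩
  have hN : N ≤ (stage hφ (Nat.pair m N)).restraint :=
    (Nat.right_le_pair m N).trans ((strictMono_restraint_stage hφ).id_le _)
  have hagree : (stage hφ (Nat.pair m N)).approx ∈ cylinder (fixedPoint hφ) N :=
    cylinder_anti _ hN ((mem_cylinder_comm _ _ _).1 (fixedPoint_mem_cylinder hφ _))
  rw [Nat.unpair_pair]
  exact ⟨n, by rwa [apply_eq_of_mem_cylinder_modulus hφ hagree]⟩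

theorem exists_fixedPoint_ne_zero_iff (m : ℕ) :
    (∃ n, fixedPoint hφ (slot m n) ≠ 0) ↔ ∃ n, φ (fixedPoint hφ) (slot m n) ≠ 0 := by
  constructor
  · rintro ⟨n, hn⟩
    obtain ⟨s, rfl, hs⟩ := exists_requires_of_fixedPoint_ne_zero hφ hn
    exact (fixedPoint_secures hφ hs).2
  · rintro ⟨n, hn⟩
    obtain ⟨s, rfl, hs⟩ := exists_requires_of_phi_fixedPoint_ne_zero hφ hn
    exact (fixedPoint_secures hφ hs).1

end Construction

end DiagonalFixedPoint

theorem diagonal_fixed_point (φ : (ℕ → ℕ) → (ℕ → ℕ)) (hφ : Continuous φ) :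
    ∃ α : ℕ → ℕ,
      (∀ m : ℕ, (∃ n : ℕ, α (2 ^ n * (2 * m + 1) - 1) ≠ 0) ↔
        (∃ n : ℕ, φ α (2 ^ n * (2 * m + 1) - 1) ≠ 0)) ∧
      ((∀ m : ℕ, ∃ n : ℕ, α (2 ^ n * (2 * m + 1) - 1) ≠ 0) ↔
        (∀ m : ℕ, ∃ n : ℕ, φ α (2 ^ n * (2 * m + 1) - 1) ≠ 0)) :=
  ⟨DiagonalFixedPoint.fixedPoint hφ, DiagonalFixedPoint.exists_fixedPoint_ne_zero_iff hφ,
    forall_congr' (DiagonalFixedPoint.exists_fixedPoint_ne_zero_iff hφ)⟩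
end

section
/- Kleene's Alternative: there exists a decidable set B of finite binary sequences such that (1) every computable infinite binary sequence has an initial segment in B, and (2) for every finite list u(0), ..., u(p−1) of elements of B with p > 0, there exists a computable infinite binary sequence α such that no u(i) is an initial segment of α. -/
/-!
Diagonalise against all programs: put `s` in the bar when, for some `e < |s|`, program `e` halts
on input `e` within `|s|` steps and `s e` equals its output (read as a bit). A computable `α`
is computed by some program `e`, so a long enough prefix of `α` is in the bar. Conversely, if
every string of a finite subset of the bar has length at most `n`, the computable sequence whose
`e`-th bit differs from the output of program `e` on `e` after `n` steps has no prefix of length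
`≤ n` in the bar, since `evaln` is monotone in the step count.
-/

open Nat.Partrec Nat.Partrec.Code

namespace KleeneAlternative

def diagVal (n e : ℕ) : Option Bool :=
  (evaln n (Denumerable.ofNat Code e) e).map (· == 1)

theorem primrec₂_diagVal : Primrec₂ diagVal :=
  Primrec.option_map
    (primrec_evaln.comp ((Primrec.fst.pair ((Primrec.ofNat Code).comp Primrec.snd)).pair
      Primrec.snd))
    (Primrec.beq.comp₂ Primrec₂.right (Primrec₂.const 1))

theorem diagVal_mono {m n e : ℕ} {b : Bool} (hmn : m ≤ n) (h : diagVal m e = some b) :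
    diagVal n e = some b := by
  obtain ⟨v, hv, rfl⟩ := Option.map_eq_some_iff.1 h
  exact Option.map_eq_some_iff.2 ⟨v, evaln_mono hmn hv, rfl⟩

theorem exists_diagVal_eq_of_computable {α : ℕ → Bool} (hα : Computable α) :
    ∃ e k, diagVal k e = some (α e) := by
  obtain ⟨c, hc⟩ := exists_code.1 (Partrec.nat_iff.1 (hα.cond (.const 1) (.const 0)))
  set e := Encodable.encode c
  have hmem : (bif α e then 1 else 0) ∈ eval c e := by simp [hc]
  obtain ⟨k, hk⟩ := evaln_complete.1 hmem
  refine ⟨e, k, Option.map_eq_some_iff.2 ⟨_, by simpa [e] using hk, ?_⟩⟩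
  cases α e <;> rfl

def bar (s : List Bool) : Bool :=
  decide (∃ e < s.length, diagVal s.length e = some (s.getD e false))

theorem computable_bar : Computable bar := by
  have hR : PrimrecRel fun (e : ℕ) (s : List Bool) =>
      diagVal s.length e = some (s.getD e false) :=
    Primrec.eq.comp (primrec₂_diagVal.comp (Primrec.list_length.comp Primrec.snd) Primrec.fst)
      (Primrec.option_some.comp ((Primrec.list_getD false).comp Primrec.snd Primrec.fst))
  have hex : PrimrecPred fun s : List Bool =>
      ∃ e < s.length, diagVal s.length e = some (s.getD e false) :=
    (hR.exists_mem_list.comp (Primrec.list_range.comp Primrec.list_length) Primrec.id).of_eq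
      (by simp)
  exact hex.decide.to_comp

theorem bar_ofFn_eq_true_iff (α : ℕ → Bool) (n : ℕ) :
    bar (List.ofFn fun i : Fin n => α i) = true ↔ ∃ e < n, diagVal n e = some (α e) := by
  simp only [bar, decide_eq_true_eq, List.length_ofFn]
  refine exists_congr fun e => and_congr_right fun he => ?_
  simp [List.getD_eq_getElem?_getD, he]

theorem exists_bar_ofFn_of_computable {α : ℕ → Bool} (hα : Computable α) :
    ∃ n, bar (List.ofFn fun i : Fin n => α i) = true := by
  obtain ⟨e, k, hk⟩ := exists_diagVal_eq_of_computable hα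
  refine ⟨max (e + 1) k, (bar_ofFn_eq_true_iff α _).2 ⟨e, by omega, ?_⟩⟩
  exact diagVal_mono (le_max_right _ _) hk

def avoider (n e : ℕ) : Bool :=
  !(diagVal n e).getD false

theorem computable_avoider (n : ℕ) : Computable (avoider n) :=
  (Primrec.not.comp (Primrec.option_getD.comp (primrec₂_diagVal.comp (Primrec.const n)
    Primrec.id) (Primrec.const false))).to_comp

theorem bar_ofFn_avoider {m n : ℕ} (hmn : m ≤ n) :
    bar (List.ofFn fun i : Fin m => avoider n i) = false := by
  rw [Bool.eq_false_iff, ne_eq, bar_ofFn_eq_true_iff]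
  rintro ⟨e, -, he⟩
  have hn := diagVal_mono hmn he
  unfold avoider at hn
  cases h : diagVal n e <;> simp_all

end KleeneAlternative

open KleeneAlternative in
theorem kleene_alternative :
    ∃ B : List Bool → Bool, Computable B ∧
      (∀ α : ℕ → Bool, Computable α →
        ∃ n : ℕ, B (List.ofFn fun i : Fin n => α i) = true) ∧
      (∀ u : List (List Bool), u ≠ [] → (∀ s ∈ u, B s = true) →
        ∃ α : ℕ → Bool, Computable α ∧
          ∀ s ∈ u, (List.ofFn fun i : Fin s.length => α i) ≠ s) := by
  refine ⟨bar, computable_bar, fun α hα => exists_bar_ofFn_of_computable hα, fun u _ hu => ?_⟩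
  set n := (u.map List.length).sum
  refine ⟨avoider n, computable_avoider n, fun s hs hprefix => ?_⟩
  have hsn : s.length ≤ n := List.le_sum_of_mem (List.mem_map_of_mem hs)
  have hbar := bar_ofFn_avoider hsn
  rw [hprefix, hu s hs] at hbar
  exact Bool.noConfusion hbar
end
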